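/- arXiv:2310.01066 — 3 statements merged into one kernel-verified Lean document; each statement's English description precedes it below -/
import Mathlib

section
/- Let A = (a_0, a_1, ..., a_n) with a_0 = 0 and (a_1, ..., a_n) a sequence of distinct integers between 1 and n, and let P_0, ..., P_k be the nonempty piles produced by patience sorting applied to A. Then for every maximum feasible set I for A and every i with 0 ≤ i ≤ k, the pile P_i contains exactly one element a_u with u ∈ I. -/
/-- One step of patience sorting: place index `i` (with value `a i`) on the
leftmost pile whose current top element is greater than `a i`, or start a
new pile at the right end if no such pile exists.  Each pile is a list of
indices with the head being the top (most recently placed) element. -/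
def place (a : ℕ → ℕ) : List (List ℕ) → ℕ → List (List ℕ)
  | [], i => [[i]]
  | p :: ps, i => if a i < a p.headI then (i :: p) :: ps else p :: place a ps i

/-- The (nonempty) piles obtained by patience sorting, processing the values
`a i` for `i ∈ idxs` in order. -/
def pilesOf (a : ℕ → ℕ) (idxs : List ℕ) : List (List ℕ) :=
  idxs.foldl (place a) []

/-- `I` is the index set of an increasing subsequence of `a`. -/
def Feasible (a : ℕ → ℕ) (I : Finset ℕ) : Prop :=
  ∀ i ∈ I, ∀ j ∈ I, i < j → a i < a j

/-- A maximum feasible set for the sequence `a₀ = 0, a₁, …, aₙ`: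
a feasible subset of the index set `{0, 1, …, n}` of largest cardinality. -/
def MaxFeasible (a : ℕ → ℕ) (n : ℕ) (I : Finset ℕ) : Prop :=
  I ⊆ Finset.range (n + 1) ∧ Feasible a I ∧
    ∀ J ⊆ Finset.range (n + 1), Feasible a J → J.card ≤ I.card


/-!
Reading a pile from the top, indices decrease while values increase, so a feasible set meets each
pile at most once. Conversely, when `a i` is put on pile `j + 1`, the top of pile `j` is an earlier
index with a smaller value (the values being distinct); following these links back from the last
pile yields a feasible set with one element per pile. A maximum feasible set `I` therefore has at
least as many elements as there are piles, and since the piles cover all indices, pigeonhole makes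
`I` meet every pile.
-/

namespace PatienceSorting

variable {a : ℕ → ℕ}

def Supports (a : ℕ → ℕ) (p q : List ℕ) : Prop :=
  ∀ x ∈ q, ∃ y ∈ p, y < x ∧ a y < a x

def IsPile (a : ℕ → ℕ) (p : List ℕ) : Prop :=
  p.Pairwise fun u v => v < u ∧ a u < a v

structure WellFormed (a : ℕ → ℕ) (L : List (List ℕ)) : Prop where
  ne_nil : ∀ p ∈ L, p ≠ []
  isPile : ∀ p ∈ L, IsPile a p
  isChain : L.IsChain (Supports a)

theorem headI_mem_of_ne_nil {p : List ℕ} (hp : p ≠ []) : p.headI ∈ p := by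
  cases p with
  | nil => exact absurd rfl hp
  | cons x p => exact List.mem_cons_self

theorem Supports.mono {p p' q : List ℕ} (h : Supports a p q) (hp : p ⊆ p') :
    Supports a p' q :=
  fun x hx => let ⟨y, hy, hyx⟩ := h x hx; ⟨y, hp hy, hyx⟩

theorem isChain_supports_cons {p : List ℕ} {L : List (List ℕ)} :
    (p :: L).IsChain (Supports a) ↔ Supports a p L.headI ∧ L.IsChain (Supports a) := by
  cases L <;> simp [Supports, show (default : List ℕ) = [] from rfl]

theorem IsPile.apply_headI_le {p : List ℕ} {v : ℕ} (hp : IsPile a p) (hv : v ∈ p) :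
    a p.headI ≤ a v := by
  cases p with
  | nil => cases hv
  | cons w p =>
    rcases List.mem_cons.1 hv with rfl | hv
    · exact le_rfl
    · exact ((List.pairwise_cons.1 hp).1 v hv).2.le

theorem IsPile.cons {p : List ℕ} {i : ℕ} (hp : IsPile a p) (hlt : ∀ x ∈ p, x < i)
    (hi : a i < a p.headI) : IsPile a (i :: p) :=
  List.pairwise_cons.2 ⟨fun v hv => ⟨hlt v hv, hi.trans_le (hp.apply_headI_le hv)⟩, hp⟩

theorem IsPile.apply_lt_of_lt {p : List ℕ} {u v : ℕ} (hp : IsPile a p) (hu : u ∈ p)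
    (hv : v ∈ p) (huv : u < v) : a v < a u := by
  induction p with
  | nil => cases hu
  | cons w p ih =>
    obtain ⟨hw, hp⟩ := List.pairwise_cons.1 hp
    rcases List.mem_cons.1 hu with rfl | hu' <;> rcases List.mem_cons.1 hv with rfl | hv'
    · exact absurd huv (lt_irrefl _)
    · exact absurd huv (hw v hv').1.asymm
    · exact (hw u hu').2
    · exact ih hp hu' hv'

theorem IsPile.eq_of_feasible {p : List ℕ} {I : Finset ℕ} {u v : ℕ} (hp : IsPile a p)
    (hI : Feasible a I) (hu : u ∈ p) (hv : v ∈ p) (huI : u ∈ I) (hvI : v ∈ I) : u = v := by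
  rcases lt_trichotomy u v with huv | rfl | hvu
  · exact absurd (hI u huI v hvI huv) (hp.apply_lt_of_lt hu hv huv).asymm
  · rfl
  · exact absurd (hI v hvI u huI hvu) (hp.apply_lt_of_lt hv hu hvu).asymm

theorem headI_place_subset (L : List (List ℕ)) (i : ℕ) :
    (place a L i).headI ⊆ i :: L.headI := by
  cases L with
  | nil => simp [place]
  | cons p L =>
    rw [place]
    split_ifs
    · exact List.Subset.refl _
    · exact List.subset_cons_self _ _

theorem mem_flatten_place {L : List (List ℕ)} {i x : ℕ} :
    x ∈ (place a L i).flatten ↔ x = i ∨ x ∈ L.flatten := by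
  induction L with
  | nil => simp [place]
  | cons p L ih =>
    rw [place]
    split_ifs <;> simp only [List.flatten_cons, List.mem_append, List.mem_cons, ih] <;> tauto

theorem WellFormed.tail {p : List ℕ} {L : List (List ℕ)} (h : WellFormed a (p :: L)) :
    WellFormed a L :=
  ⟨fun q hq => h.ne_nil q (List.mem_cons_of_mem p hq),
    fun q hq => h.isPile q (List.mem_cons_of_mem p hq), h.isChain.tail⟩

theorem WellFormed.cons {p : List ℕ} {L : List (List ℕ)} (hL : WellFormed a L) (hp : p ≠ [])
    (hpile : IsPile a p) (hsupp : Supports a p L.headI) : WellFormed a (p :: L) :=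
  ⟨List.forall_mem_cons.2 ⟨hp, hL.ne_nil⟩, List.forall_mem_cons.2 ⟨hpile, hL.isPile⟩,
    isChain_supports_cons.2 ⟨hsupp, hL.isChain⟩⟩

theorem wellFormed_place {L : List (List ℕ)} {i : ℕ} (hL : WellFormed a L)
    (hlt : ∀ x ∈ L.flatten, x < i) (hne : ∀ x ∈ L.flatten, a x ≠ a i) :
    WellFormed a (place a L i) := by
  induction L with
  | nil => exact ⟨by simp [place], by simp [place, IsPile], by simp [place]⟩
  | cons p L ih =>
    have hp : p ≠ [] := hL.ne_nil p List.mem_cons_self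
    have hpile : IsPile a p := hL.isPile p List.mem_cons_self
    have hsupp : Supports a p L.headI := (isChain_supports_cons.1 hL.isChain).1
    rw [place]
    split_ifs with hi
    · exact hL.tail.cons (List.cons_ne_nil _ _)
        (hpile.cons (fun x hx => hlt x (by simp [hx])) hi)
        (hsupp.mono (List.subset_cons_self _ _))
    · have htop : p.headI ∈ (p :: L).flatten := by simp [headI_mem_of_ne_nil hp]
      have hL' := ih hL.tail (fun x hx => hlt x (by simp [hx])) (fun x hx => hne x (by simp [hx]))
      refine hL'.cons hp hpile fun x hx => ?_
      rcases List.mem_cons.1 (headI_place_subset L i hx) with rfl | hx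
      · exact ⟨p.headI, headI_mem_of_ne_nil hp, hlt _ htop,
          (not_lt.1 hi).lt_of_ne (hne _ htop)⟩
      · exact hsupp x hx

theorem pilesOf_range_succ (m : ℕ) :
    pilesOf a (List.range (m + 1)) = place a (pilesOf a (List.range m)) m := by
  simp [pilesOf, List.range_succ]

theorem mem_flatten_pilesOf_range {m x : ℕ} :
    x ∈ (pilesOf a (List.range m)).flatten ↔ x < m := by
  induction m with
  | zero => simp [pilesOf]
  | succ m ih => rw [pilesOf_range_succ, mem_flatten_place, ih]; omega

theorem wellFormed_pilesOf_range {k : ℕ} (ha : Set.InjOn a (Set.Iio k)) :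
    WellFormed a (pilesOf a (List.range k)) := by
  induction k with
  | zero => exact ⟨by simp [pilesOf], by simp [pilesOf], by simp [pilesOf]⟩
  | succ m ih =>
    rw [pilesOf_range_succ]
    refine wellFormed_place (ih (ha.mono (Set.Iio_subset_Iio m.le_succ)))
      (fun x hx => mem_flatten_pilesOf_range.1 hx) (fun x hx hax => ?_)
    have hxm : x < m := mem_flatten_pilesOf_range.1 hx
    exact hxm.ne (ha (by simp; omega) (by simp) hax)

theorem exists_feasible_of_isChain_concat (L : List (List ℕ)) :
    ∀ p : List ℕ, (L ++ [p]).IsChain (Supports a) → ∀ x ∈ p, ∃ J : Finset ℕ,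
      J.card = L.length + 1 ∧ Feasible a J ∧ ∀ z ∈ J, z ≤ x ∧ a z ≤ a x := by
  induction L using List.reverseRecOn with
  | nil =>
    intro p _ x _
    exact ⟨{x}, rfl, by simp [Feasible], by simp⟩
  | append_singleton L q ih =>
    intro p hL x hx
    obtain ⟨hLq, -, hqp⟩ := List.isChain_append.1 hL
    obtain ⟨y, hy, hyx, hayx⟩ := hqp q (by simp) p rfl x hx
    obtain ⟨J, hcard, hJ, hle⟩ := ih q hLq y hy
    have hxJ : x ∉ J := fun h => by have := (hle x h).1; omega
    refine ⟨insert x J, by simp [hxJ, hcard], ?_, ?_⟩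
    · intro i hi j hj hij
      rcases Finset.mem_insert.1 hi with rfl | hi' <;>
        rcases Finset.mem_insert.1 hj with rfl | hj'
      · exact absurd hij (lt_irrefl _)
      · have := (hle j hj').1; omega
      · exact (hle i hi').2.trans_lt hayx
      · exact hJ i hi' j hj' hij
    · simp only [Finset.mem_insert, forall_eq_or_imp, le_refl, true_and]
      exact fun z hz => ⟨(hle z hz).1.trans hyx.le, (hle z hz).2.trans hayx.le⟩

theorem WellFormed.length_le_card {L : List (List ℕ)} {n : ℕ} {I : Finset ℕ}
    (hL : WellFormed a L) (hbound : ∀ x ∈ L.flatten, x ≤ n) (hI : MaxFeasible a n I) :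
    L.length ≤ I.card := by
  obtain rfl | ⟨L, p, rfl⟩ := L.eq_nil_or_concat'
  · simp
  · have htop : p.headI ∈ p := headI_mem_of_ne_nil (hL.ne_nil p (by simp))
    obtain ⟨J, hcard, hJ, hle⟩ :=
      exists_feasible_of_isChain_concat L p hL.isChain p.headI htop
    have hJn : J ⊆ Finset.range (n + 1) := fun z hz =>
      Finset.mem_range.2 (Nat.lt_succ_of_le ((hle z hz).1.trans (hbound _ (by simp [htop]))))
    simpa [hcard] using hI.2.2 J hJn hJ

theorem exists_mem_of_length_le_card {α : Type*} {L : List (List α)} {I : Finset α}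
    (hcover : ∀ u ∈ I, ∃ p ∈ L, u ∈ p)
    (hsub : ∀ p ∈ L, ∀ u ∈ p, ∀ v ∈ p, u ∈ I → v ∈ I → u = v)
    (hlen : L.length ≤ I.card) {p : List α} (hp : p ∈ L) : ∃ u ∈ p, u ∈ I := by
  classical
  choose f hfL hf using hcover
  obtain ⟨u, hu, rfl⟩ := Finset.surj_on_of_inj_on_of_card_le f (t := L.toFinset)
    (fun u hu => List.mem_toFinset.2 (hfL u hu))
    (fun u v hu hv huv => hsub _ (hfL u hu) u (hf u hu) v (huv ▸ hf v hv) hu hv)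
    (L.toFinset_card_le.trans hlen) p (List.mem_toFinset.2 hp)
  exact ⟨u, hf u hu, hu⟩

theorem injOn_Iio_succ {n : ℕ} (h0 : a 0 = 0)
    (hmem : ∀ i ∈ Finset.Icc 1 n, a i ∈ Finset.Icc 1 n)
    (hinj : ∀ i ∈ Finset.Icc 1 n, ∀ j ∈ Finset.Icc 1 n, a i = a j → i = j) :
    Set.InjOn a (Set.Iio (n + 1)) := by
  have hpos : ∀ i, 0 < i → i ≤ n → 0 < a i := fun i hi hin =>
    (Finset.mem_Icc.1 (hmem i (Finset.mem_Icc.2 ⟨hi, hin⟩))).1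
  intro x hx y hy hxy
  simp only [Set.mem_Iio, Nat.lt_succ_iff] at hx hy
  rcases x.eq_zero_or_pos with rfl | hx0 <;> rcases y.eq_zero_or_pos with rfl | hy0
  · rfl
  · have := hpos y hy0 hy; omega
  · have := hpos x hx0 hx; omega
  · exact hinj x (Finset.mem_Icc.2 ⟨hx0, hx⟩) y (Finset.mem_Icc.2 ⟨hy0, hy⟩) hxy

end PatienceSorting

open PatienceSorting

theorem stmt1_general (n : ℕ) (a : ℕ → ℕ) (h0 : a 0 = 0)
    (hmem : ∀ i ∈ Finset.Icc 1 n, a i ∈ Finset.Icc 1 n)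
    (hinj : ∀ i ∈ Finset.Icc 1 n, ∀ j ∈ Finset.Icc 1 n, a i = a j → i = j)
    (I : Finset ℕ) (hI : MaxFeasible a n I)
    (p : List ℕ) (hp : p ∈ pilesOf a (List.range (n + 1))) :
    ∃! u : ℕ, u ∈ p ∧ u ∈ I := by
  set L := pilesOf a (List.range (n + 1))
  have hL : WellFormed a L := wellFormed_pilesOf_range (injOn_Iio_succ h0 hmem hinj)
  have hbound : ∀ x ∈ L.flatten, x ≤ n :=
    fun x hx => Nat.lt_succ_iff.1 (mem_flatten_pilesOf_range.1 hx)
  have hcover : ∀ u ∈ I, ∃ q ∈ L, u ∈ q :=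
    fun u hu => List.mem_flatten.1 (mem_flatten_pilesOf_range.2 (Finset.mem_range.1 (hI.1 hu)))
  have hunique : ∀ q ∈ L, ∀ u ∈ q, ∀ v ∈ q, u ∈ I → v ∈ I → u = v :=
    fun q hq u hu v hv => (hL.isPile q hq).eq_of_feasible hI.2.1 hu hv
  obtain ⟨u, hup, huI⟩ :=
    exists_mem_of_length_le_card hcover hunique (hL.length_le_card hbound hI) hp
  exact ⟨u, ⟨hup, huI⟩, fun v hv => hunique p hp v hv.1 u hup hv.2 huI⟩

/-- For every maximum feasible set `I` for `a₀ = 0, a₁, …, aₙ` (where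
`a₁, …, aₙ` are distinct integers between `1` and `n`), each nonempty pile
produced by patience sorting contains exactly one element `a u` with `u ∈ I`. -/
theorem stmt1 (n : ℕ) (a : ℕ → ℕ) (hn : 0 < n) (h0 : a 0 = 0)
    (hmem : ∀ i ∈ Finset.Icc 1 n, a i ∈ Finset.Icc 1 n)
    (hinj : ∀ i ∈ Finset.Icc 1 n, ∀ j ∈ Finset.Icc 1 n, a i = a j → i = j)
    (I : Finset ℕ) (hI : MaxFeasible a n I)
    (p : List ℕ) (hp : p ∈ pilesOf a (List.range (n + 1))) :
    ∃! u : ℕ, u ∈ p ∧ u ∈ I :=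
  stmt1_general n a h0 hmem hinj I hI p hp
end

section
/- Let A = (a_0, a_1, ..., a_n) with a_0 = 0 and (a_1, ..., a_n) a sequence of distinct integers between 1 and n, and let P_0, ..., P_k be the nonempty piles produced by patience sorting applied to A. Then there exists a feasible set for A of cardinality k + 1 containing exactly one index from each pile P_0, ..., P_k, and this cardinality equals the maximum cardinality of a feasible set for A; in particular, the number of nonempty piles equals the size of a maximum feasible set. -/
/-!
Each pile, read from the top, lists indices in decreasing order with increasing values, so a
feasible set meets every pile at most once and has at most as many elements as there are piles.
Conversely, when `a i` goes on a pile other than the first, the current top of the pile to its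
left has a smaller index and a smaller value (values being distinct); following these back
pointers from an element of the last pile down to the first pile yields a feasible set with
exactly one index in every pile.
-/

theorem List.Pairwise.rel_or_rel {α : Type*} {R : α → α → Prop} {l : List α} (hl : l.Pairwise R)
    {u v : α} (hu : u ∈ l) (hv : v ∈ l) (huv : u ≠ v) : R u v ∨ R v u := by
  have : Std.Symm fun x y => R x y ∨ R y x := ⟨fun _ _ => Or.symm⟩
  exact (hl.imp (S := fun x y => R x y ∨ R y x) Or.inl).forall hu hv huv

theorem List.Forall₂.exists_of_mem_left {α β : Type*} {R : α → β → Prop} {l₁ : List α}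
    {l₂ : List β} (h : l₁.Forall₂ R l₂) {x : α} (hx : x ∈ l₁) : ∃ y ∈ l₂, R x y := by
  induction h with
  | nil => simp at hx
  | cons hr _ ih =>
    rcases List.mem_cons.1 hx with rfl | hx
    · exact ⟨_, List.mem_cons_self, hr⟩
    · obtain ⟨y, hy, hxy⟩ := ih hx
      exact ⟨y, List.mem_cons_of_mem _ hy, hxy⟩

theorem List.Forall₂.exists_of_mem_right {α β : Type*} {R : α → β → Prop} {l₁ : List α}
    {l₂ : List β} (h : l₁.Forall₂ R l₂) {y : β} (hy : y ∈ l₂) : ∃ x ∈ l₁, R x y := by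
  induction h with
  | nil => simp at hy
  | cons hr _ ih =>
    rcases List.mem_cons.1 hy with rfl | hy
    · exact ⟨_, List.mem_cons_self, hr⟩
    · obtain ⟨x, hx, hxy⟩ := ih hy
      exact ⟨x, List.mem_cons_of_mem _ hx, hxy⟩

def Precedes (a : ℕ → ℕ) (x y : ℕ) : Prop := x < y ∧ a x < a y

def StacksOn (a : ℕ → ℕ) (x y : ℕ) : Prop := y < x ∧ a x < a y

def PileLinked (a : ℕ → ℕ) (p q : List ℕ) : Prop := ∀ y ∈ q, ∃ x ∈ p, Precedes a x y

section

variable {a : ℕ → ℕ}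

instance : Trans (Precedes a) (Precedes a) (Precedes a) :=
  ⟨fun h₁ h₂ => ⟨h₁.1.trans h₂.1, h₁.2.trans h₂.2⟩⟩

instance : Trans (StacksOn a) (StacksOn a) (StacksOn a) :=
  ⟨fun h₁ h₂ => ⟨h₂.1.trans h₁.1, h₁.2.trans h₂.2⟩⟩

theorem PileLinked.cons {p q : List ℕ} (h : PileLinked a p q) (x : ℕ) : PileLinked a (x :: p) q :=
  fun y hy => let ⟨z, hz, hzy⟩ := h y hy; ⟨z, List.mem_cons_of_mem x hz, hzy⟩

theorem lt_of_mem_pile {p : List ℕ} (hp : p.IsChain (StacksOn a)) {u v : ℕ} (hu : u ∈ p)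
    (hv : v ∈ p) (huv : u < v) : a v < a u := by
  rcases hp.pairwise.rel_or_rel hu hv huv.ne with h | h
  · exact absurd h.1 huv.not_gt
  · exact h.2

theorem eq_of_mem_pile_of_feasible {p : List ℕ} (hp : p.IsChain (StacksOn a)) {J : Finset ℕ}
    (hJ : Feasible a J) {u v : ℕ} (hu : u ∈ J) (hv : v ∈ J) (hup : u ∈ p) (hvp : v ∈ p) :
    u = v := by
  rcases lt_trichotomy u v with h | h | h
  · exact absurd (hJ u hu v hv h) (lt_of_mem_pile hp hup hvp h).not_gt
  · exact h
  · exact absurd (hJ v hv u hu h) (lt_of_mem_pile hp hvp hup h).not_gt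

theorem card_le_length_of_feasible {P : List (List ℕ)} (hP : ∀ p ∈ P, p.IsChain (StacksOn a))
    {J : Finset ℕ} (hJP : ∀ j ∈ J, ∃ p ∈ P, j ∈ p) (hJ : Feasible a J) : J.card ≤ P.length := by
  classical
  calc J.card ≤ (P.toFinset.biUnion fun p => J.filter (· ∈ p)).card := by
        refine Finset.card_le_card fun j hj => ?_
        obtain ⟨p, hp, hjp⟩ := hJP j hj
        exact Finset.mem_biUnion.2 ⟨p, List.mem_toFinset.2 hp, Finset.mem_filter.2 ⟨hj, hjp⟩⟩
    _ ≤ ∑ p ∈ P.toFinset, (J.filter (· ∈ p)).card := Finset.card_biUnion_le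
    _ ≤ ∑ _p ∈ P.toFinset, 1 := by
        refine Finset.sum_le_sum fun p hp => Finset.card_le_one.2 fun u hu v hv => ?_
        rw [Finset.mem_filter] at hu hv
        exact eq_of_mem_pile_of_feasible (hP p (List.mem_toFinset.1 hp)) hJ hu.1 hv.1 hu.2 hv.2
    _ ≤ P.length := by simpa using List.toFinset_card_le P

theorem feasible_toFinset {l : List ℕ} (hl : l.IsChain (Precedes a)) : Feasible a l.toFinset := by
  intro u hu v hv huv
  rw [List.mem_toFinset] at hu hv
  rcases hl.pairwise.rel_or_rel hu hv huv.ne with h | h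
  · exact h.2
  · exact absurd h.1 huv.not_gt

theorem exists_isChain_forall₂_mem {P : List (List ℕ)} (hne : ∀ p ∈ P, p ≠ [])
    (hP : P.IsChain (PileLinked a)) :
    ∃ l : List ℕ, l.IsChain (Precedes a) ∧ l.Forall₂ (· ∈ ·) P := by
  induction P with
  | nil => exact ⟨[], List.IsChain.nil, List.Forall₂.nil⟩
  | cons p ps ih =>
    obtain ⟨l, hl, hlps⟩ := ih (fun q hq => hne q (List.mem_cons_of_mem p hq)) hP.tail
    cases hlps with
    | nil =>
      obtain ⟨x, hx⟩ := List.exists_mem_of_ne_nil p (hne p List.mem_cons_self)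
      exact ⟨[x], List.isChain_singleton x, List.Forall₂.cons hx List.Forall₂.nil⟩
    | cons hyq hrest =>
      obtain ⟨x, hx, hxy⟩ := (List.isChain_cons_cons.1 hP).1 _ hyq
      exact ⟨_, List.isChain_cons_cons.2 ⟨hxy, hl⟩,
        List.Forall₂.cons hx (List.Forall₂.cons hyq hrest)⟩

theorem place_ne_nil {P : List (List ℕ)} (hP : ∀ p ∈ P, p ≠ []) (i : ℕ) :
    ∀ p ∈ place a P i, p ≠ [] := by
  induction P with
  | nil => simp [place]
  | cons p ps ih =>
    rw [List.forall_mem_cons] at hP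
    simp only [place]
    split_ifs
    · simpa using hP.2
    · simpa [hP.1] using ih hP.2

theorem mem_flatten_place {P : List (List ℕ)} {i x : ℕ} :
    x ∈ (place a P i).flatten ↔ x ∈ P.flatten ∨ x = i := by
  induction P with
  | nil => simp [place]
  | cons p ps ih =>
    simp only [place]
    split_ifs <;> simp only [List.flatten_cons, List.mem_append, List.mem_cons, ih] <;> tauto

theorem isChain_stacksOn_place {P : List (List ℕ)} (hP : ∀ p ∈ P, p.IsChain (StacksOn a)) {i : ℕ}
    (hlt : ∀ x ∈ P.flatten, x < i) : ∀ p ∈ place a P i, p.IsChain (StacksOn a) := by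
  induction P with
  | nil => simp [place]
  | cons p ps ih =>
    rw [List.forall_mem_cons] at hP
    rw [List.flatten_cons, List.forall_mem_append] at hlt
    simp only [place]
    split_ifs with h <;> rw [List.forall_mem_cons]
    · refine ⟨?_, hP.2⟩
      cases p with
      | nil => exact List.isChain_singleton i
      | cons y ys => exact List.isChain_cons_cons.2 ⟨⟨hlt.1 y List.mem_cons_self, h⟩, hP.1⟩
    · exact ⟨hP.1, ih hP.2 hlt.2⟩

theorem exists_precedes_of_not_lt_headI {p : List ℕ} (hp : p ≠ []) {i : ℕ}
    (hlt : ∀ x ∈ p, x < i) (hval : ∀ x ∈ p, a x ≠ a i) (h : ¬a i < a p.headI) :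
    ∃ x ∈ p, Precedes a x i := by
  obtain ⟨y, ys, rfl⟩ := List.exists_cons_of_ne_nil hp
  exact ⟨y, List.mem_cons_self, hlt y List.mem_cons_self,
    lt_of_le_of_ne (not_lt.1 h) (hval y List.mem_cons_self)⟩

theorem isChain_pileLinked_cons_place {P : List (List ℕ)} (hne : ∀ p ∈ P, p ≠ []) {i : ℕ}
    (hlt : ∀ x ∈ P.flatten, x < i) (hval : ∀ x ∈ P.flatten, a x ≠ a i) {q : List ℕ}
    (hq : ∃ x ∈ q, Precedes a x i) (hP : (q :: P).IsChain (PileLinked a)) :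
    (q :: place a P i).IsChain (PileLinked a) := by
  induction P generalizing q with
  | nil => simpa [place, PileLinked] using hq
  | cons p ps ih =>
    rw [List.forall_mem_cons] at hne
    rw [List.flatten_cons, List.forall_mem_append] at hlt hval
    obtain ⟨hqp, hps⟩ := List.isChain_cons_cons.1 hP
    simp only [place]
    split_ifs with h
    · exact List.isChain_cons_cons.2 ⟨List.forall_mem_cons.2 ⟨hq, hqp⟩, hps.imp_head (·.cons i)⟩
    · exact List.isChain_cons_cons.2 ⟨hqp, ih hne.2 hlt.2 hval.2
        (exists_precedes_of_not_lt_headI hne.1 hlt.1 hval.1 h) hps⟩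

theorem isChain_pileLinked_place {P : List (List ℕ)} (hne : ∀ p ∈ P, p ≠ []) {i : ℕ}
    (hlt : ∀ x ∈ P.flatten, x < i) (hval : ∀ x ∈ P.flatten, a x ≠ a i)
    (hP : P.IsChain (PileLinked a)) : (place a P i).IsChain (PileLinked a) := by
  cases P with
  | nil => simp [place]
  | cons p ps =>
    rw [List.forall_mem_cons] at hne
    rw [List.flatten_cons, List.forall_mem_append] at hlt hval
    simp only [place]
    split_ifs with h
    · exact hP.imp_head (·.cons i)
    · exact isChain_pileLinked_cons_place hne.2 hlt.2 hval.2
        (exists_precedes_of_not_lt_headI hne.1 hlt.1 hval.1 h) hP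

structure IsPatienceState (a : ℕ → ℕ) (m : ℕ) (P : List (List ℕ)) : Prop where
  ne_nil : ∀ p ∈ P, p ≠ []
  mem_flatten : ∀ x, x ∈ P.flatten ↔ x < m
  pile_isChain : ∀ p ∈ P, p.IsChain (StacksOn a)
  isChain : P.IsChain (PileLinked a)

theorem IsPatienceState.place {m : ℕ} {P : List (List ℕ)} (hS : IsPatienceState a m P)
    (hval : ∀ x < m, a x ≠ a m) : IsPatienceState a (m + 1) (place a P m) := by
  have hlt : ∀ x ∈ P.flatten, x < m := fun x => (hS.mem_flatten x).1
  refine ⟨place_ne_nil hS.ne_nil m, fun x => ?_, isChain_stacksOn_place hS.pile_isChain hlt,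
    isChain_pileLinked_place hS.ne_nil hlt (fun x hx => hval x (hlt x hx)) hS.isChain⟩
  rw [mem_flatten_place, hS.mem_flatten]
  omega

theorem isPatienceState_pilesOf {m : ℕ} (ha : Set.InjOn a (Set.Iio m)) :
    IsPatienceState a m (pilesOf a (List.range m)) := by
  induction m with
  | zero => constructor <;> simp [pilesOf]
  | succ m ih =>
    rw [pilesOf, List.range_succ, List.foldl_concat]
    refine (ih (ha.mono fun x hx => ?_)).place fun x hx hax => hx.ne (ha ?_ ?_ hax)
    all_goals simp only [Set.mem_Iio] at *; omega

theorem injOn_Iio_succ {n : ℕ} (h0 : a 0 = 0) (hmem : ∀ i ∈ Finset.Icc 1 n, a i ∈ Finset.Icc 1 n)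
    (hinj : ∀ i ∈ Finset.Icc 1 n, ∀ j ∈ Finset.Icc 1 n, a i = a j → i = j) :
    Set.InjOn a (Set.Iio (n + 1)) := by
  have hpos : ∀ k < n + 1, 0 < k → 0 < a k := fun k hk hk0 =>
    (Finset.mem_Icc.1 (hmem k (Finset.mem_Icc.2 ⟨hk0, by omega⟩))).1
  intro i hi j hj hij
  simp only [Set.mem_Iio] at hi hj
  rcases Nat.eq_zero_or_pos i with rfl | hi0 <;> rcases Nat.eq_zero_or_pos j with rfl | hj0
  · rfl
  · exact absurd (hpos j hj hj0) (by omega)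
  · exact absurd (hpos i hi hi0) (by omega)
  · exact hinj i (Finset.mem_Icc.2 ⟨hi0, by omega⟩) j (Finset.mem_Icc.2 ⟨hj0, by omega⟩) hij

end

theorem stmt5_general (n : ℕ) (a : ℕ → ℕ) (h0 : a 0 = 0)
    (hmem : ∀ i ∈ Finset.Icc 1 n, a i ∈ Finset.Icc 1 n)
    (hinj : ∀ i ∈ Finset.Icc 1 n, ∀ j ∈ Finset.Icc 1 n, a i = a j → i = j) :
    ∃ I : Finset ℕ, I ⊆ Finset.range (n + 1) ∧ Feasible a I ∧
      I.card = (pilesOf a (List.range (n + 1))).length ∧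
      (∀ p ∈ pilesOf a (List.range (n + 1)), ∃! u : ℕ, u ∈ p ∧ u ∈ I) ∧
      (∀ J ⊆ Finset.range (n + 1), Feasible a J → J.card ≤ I.card) := by
  set P := pilesOf a (List.range (n + 1))
  have hP : IsPatienceState a (n + 1) P := isPatienceState_pilesOf (injOn_Iio_succ h0 hmem hinj)
  have mem_piles : ∀ x, x < n + 1 ↔ ∃ p ∈ P, x ∈ p := fun x => by
    rw [← hP.mem_flatten, List.mem_flatten]
  obtain ⟨l, hl, hlP⟩ := exists_isChain_forall₂_mem hP.ne_nil hP.isChain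
  have hI : Feasible a l.toFinset := feasible_toFinset hl
  have hcard : l.toFinset.card = P.length := by
    rw [List.toFinset_card_of_nodup (hl.pairwise.imp fun h => h.1.ne), hlP.length_eq]
  refine ⟨l.toFinset, fun x hx => ?_, hI, hcard, fun p hp => ?_, fun J hJ hJf => ?_⟩
  · exact Finset.mem_range.2 ((mem_piles x).2 (hlP.exists_of_mem_left (List.mem_toFinset.1 hx)))
  · obtain ⟨x, hxl, hxp⟩ := hlP.exists_of_mem_right hp
    exact ⟨x, ⟨hxp, List.mem_toFinset.2 hxl⟩, fun v hv =>
      eq_of_mem_pile_of_feasible (hP.pile_isChain p hp) hI hv.2 (List.mem_toFinset.2 hxl) hv.1 hxp⟩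
  · exact hcard ▸ card_le_length_of_feasible hP.pile_isChain
      (fun j hj => (mem_piles j).1 (Finset.mem_range.1 (hJ hj))) hJf

/-- Let `P₀, …, P_k` be the nonempty piles produced by patience sorting on
`a₀ = 0, a₁, …, aₙ` (where `a₁, …, aₙ` are distinct integers between `1` and
`n`).  Then there is a feasible set `I` of cardinality `k + 1` (the number of
nonempty piles) containing exactly one index from each pile, and this
cardinality is the maximum cardinality of a feasible set. -/
theorem stmt5 (n : ℕ) (a : ℕ → ℕ) (hn : 0 < n) (h0 : a 0 = 0)
    (hmem : ∀ i ∈ Finset.Icc 1 n, a i ∈ Finset.Icc 1 n)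
    (hinj : ∀ i ∈ Finset.Icc 1 n, ∀ j ∈ Finset.Icc 1 n, a i = a j → i = j) :
    ∃ I : Finset ℕ, I ⊆ Finset.range (n + 1) ∧ Feasible a I ∧
      I.card = (pilesOf a (List.range (n + 1))).length ∧
      (∀ p ∈ pilesOf a (List.range (n + 1)), ∃! u : ℕ, u ∈ p ∧ u ∈ I) ∧
      (∀ J ⊆ Finset.range (n + 1), Feasible a J → J.card ≤ I.card) :=
  stmt5_general n a h0 hmem hinj
end

section
/- Let A = (a_0, a_1, ..., a_n) with a_0 = 0 and (a_1, ..., a_n) a sequence of distinct integers between 1 and n, and let P_0, ..., P_k be the nonempty piles produced by patience sorting applied to A. If I and J are maximum feasible sets for A with I \ J = {u} and J \ I = {v}, then a_u and a_v belong to the same pile P_t for some 0 ≤ t ≤ k. -/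
open Finset

namespace Feasible

variable {a : ℕ → ℕ} {S T : Finset ℕ}

theorem mono (h : S ⊆ T) (hT : Feasible a T) : Feasible a S :=
  fun i hi j hj hij => hT i (h hi) j (h hj) hij

theorem singleton (a : ℕ → ℕ) (i : ℕ) : Feasible a {i} := by
  intro x hx y hy hxy
  rw [mem_singleton] at hx hy
  omega

theorem insert {i : ℕ} (hS : Feasible a S) (hlt : ∀ x ∈ S, x < i → a x < a i)
    (hgt : ∀ x ∈ S, i < x → a i < a x) : Feasible a (insert i S) := by
  intro x hx y hy hxy
  rcases mem_insert.1 hx with rfl | hxS <;> rcases mem_insert.1 hy with rfl | hyS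
  · omega
  · exact hgt y hyS hxy
  · exact hlt x hxS hxy
  · exact hS x hxS y hyS hxy

theorem union (hS : Feasible a S) (hT : Feasible a T)
    (hST : ∀ x ∈ S, ∀ y ∈ T, x < y ∧ a x < a y) : Feasible a (S ∪ T) := by
  intro x hx y hy hxy
  rcases mem_union.1 hx with hxS | hxT <;> rcases mem_union.1 hy with hyS | hyT
  · exact hS x hxS y hyS hxy
  · exact (hST x hxS y hyT).2
  · exact absurd (hST y hyS x hxT).1 (by omega)
  · exact hT x hxT y hyT hxy

end Feasible

open scoped Classical in
noncomputable def lisEnd (a : ℕ → ℕ) (i : ℕ) : ℕ :=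
  ((range (i + 1)).powerset.filter fun S => i ∈ S ∧ Feasible a S).sup card

section lisEnd

variable {a : ℕ → ℕ} {i j : ℕ}

theorem card_le_lisEnd {S : Finset ℕ} (hS : S ⊆ range (i + 1)) (hi : i ∈ S)
    (hf : Feasible a S) : #S ≤ lisEnd a i := by
  classical
  exact le_sup (f := card) (by simpa using ⟨hS, hi, hf⟩)

theorem exists_card_eq_lisEnd (a : ℕ → ℕ) (i : ℕ) :
    ∃ S ⊆ range (i + 1), i ∈ S ∧ Feasible a S ∧ #S = lisEnd a i := by
  classical
  have hne : ((range (i + 1)).powerset.filter fun S => i ∈ S ∧ Feasible a S).Nonempty :=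
    ⟨{i}, by simpa using Feasible.singleton a i⟩
  obtain ⟨S, hS, hsup⟩ := exists_mem_eq_sup _ hne card
  simp only [mem_filter, mem_powerset] at hS
  exact ⟨S, hS.1, hS.2.1, hS.2.2, by rw [lisEnd, hsup]⟩

theorem one_le_lisEnd (a : ℕ → ℕ) (i : ℕ) : 1 ≤ lisEnd a i := by
  simpa using card_le_lisEnd (by simp) (mem_singleton_self i) (Feasible.singleton a i)

theorem lisEnd_lt_of_lt (hji : j < i) (ha : a j < a i) : lisEnd a j < lisEnd a i := by
  obtain ⟨S, hS, hjS, hfS, hcard⟩ := exists_card_eq_lisEnd a j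
  have hSj : ∀ x ∈ S, x ≤ j := fun x hx => Nat.lt_succ_iff.1 (mem_range.1 (hS hx))
  have hfeas : Feasible a (insert i S) := by
    refine hfS.insert (fun x hx _ => ?_) (fun x hx hix => absurd (hSj x hx) (by omega))
    rcases (hSj x hx).lt_or_eq with hxj | rfl
    · exact (hfS x hx j hjS hxj).trans ha
    · exact ha
  have hsub : insert i S ⊆ range (i + 1) :=
    insert_subset (by simp) fun x hx => mem_range.2 (by have := hSj x hx; omega)
  have := card_le_lisEnd hsub (mem_insert_self i S) hfeas
  rw [card_insert_of_notMem fun h => absurd (hSj i h) (by omega), hcard] at this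
  omega

theorem exists_lisEnd_pred (h : 2 ≤ lisEnd a i) :
    ∃ j < i, a j < a i ∧ lisEnd a j + 1 = lisEnd a i := by
  obtain ⟨S, hS, hiS, hfS, hcard⟩ := exists_card_eq_lisEnd a i
  have hne : (S.erase i).Nonempty := by
    rw [← card_pos, card_erase_of_mem hiS]; omega
  set j := (S.erase i).max' hne
  have hjS : j ∈ S.erase i := max'_mem _ hne
  have hji : j < i := lt_of_le_of_ne (Nat.lt_succ_iff.1 (mem_range.1 (hS (mem_of_mem_erase hjS))))
    (ne_of_mem_erase hjS)
  have haji : a j < a i := hfS j (mem_of_mem_erase hjS) i hiS hji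
  have hle := card_le_lisEnd (fun x hx => mem_range.2 (Nat.lt_succ_of_le (le_max' _ x hx))) hjS
    (hfS.mono (erase_subset i S))
  rw [card_erase_of_mem hiS, hcard] at hle
  exact ⟨j, hji, haji, by have := lisEnd_lt_of_lt hji haji; omega⟩

theorem exists_lt_lisEnd_eq {k : ℕ} (hk : 1 ≤ k) (hki : k < lisEnd a i) :
    ∃ j < i, a j < a i ∧ lisEnd a j = k := by
  obtain ⟨d, hd⟩ := Nat.exists_eq_add_of_lt hki
  induction d generalizing i with
  | zero =>
    obtain ⟨j, hji, ha, hj⟩ := exists_lisEnd_pred (a := a) (i := i) (by omega)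
    exact ⟨j, hji, ha, by omega⟩
  | succ d ih =>
    obtain ⟨j, hji, ha, hj⟩ := exists_lisEnd_pred (a := a) (i := i) (by omega)
    obtain ⟨j', hj'j, ha', hj'⟩ := ih (i := j) (by omega) (by omega)
    exact ⟨j', hj'j.trans hji, ha'.trans ha, hj'⟩

end lisEnd

theorem mem_sdiff_of_sdiff_eq_singleton {α : Type*} [DecidableEq α] {I J : Finset α} {u : α}
    (hu : I \ J = {u}) : u ∈ I ∧ u ∉ J :=
  mem_sdiff.1 (hu ▸ mem_singleton_self u)

theorem mem_of_sdiff_eq_singleton {α : Type*} [DecidableEq α] {I J : Finset α} {u x : α}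
    (hu : I \ J = {u}) (hx : x ∈ I) (hxu : x ≠ u) : x ∈ J := by
  by_contra hxJ
  exact hxu (mem_singleton.1 (hu ▸ mem_sdiff.2 ⟨hx, hxJ⟩))

theorem card_filter_le_of_sdiff_eq_singleton {α : Type*} [LinearOrder α] {I J : Finset α} {u : α}
    (hu : I \ J = {u}) : #(I.filter (· ≤ u)) = #((I ∩ J).filter (· < u)) + 1 := by
  obtain ⟨huI, huJ⟩ := mem_sdiff_of_sdiff_eq_singleton hu
  have : I.filter (· ≤ u) = insert u ((I ∩ J).filter (· < u)) := by
    ext x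
    simp only [mem_filter, mem_insert, mem_inter]
    constructor
    · rintro ⟨hxI, hxu⟩
      rcases hxu.lt_or_eq with hxu | rfl
      · exact Or.inr ⟨⟨hxI, mem_of_sdiff_eq_singleton hu hxI hxu.ne⟩, hxu⟩
      · exact Or.inl rfl
    · rintro (rfl | ⟨⟨hxI, -⟩, hxu⟩)
      · exact ⟨huI, le_rfl⟩
      · exact ⟨hxI, hxu.le⟩
  rw [this, card_insert_of_notMem (by simp)]

namespace MaxFeasible

variable {a : ℕ → ℕ} {n : ℕ} {I J : Finset ℕ}

theorem lisEnd_eq_card_filter (hI : MaxFeasible a n I) {i : ℕ} (hi : i ∈ I) :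
    lisEnd a i = #(I.filter (· ≤ i)) := by
  obtain ⟨hIn, hIf, hImax⟩ := hI
  refine le_antisymm ?_ (card_le_lisEnd (fun x hx => mem_range.2 (Nat.lt_succ_of_le
    (mem_filter.1 hx).2)) (mem_filter.2 ⟨hi, le_rfl⟩) (hIf.mono (filter_subset _ _)))
  obtain ⟨S, hS, hiS, hfS, hcard⟩ := exists_card_eq_lisEnd a i
  have hSi : ∀ x ∈ S, x ≤ i := fun x hx => Nat.lt_succ_iff.1 (mem_range.1 (hS hx))
  -- an increasing sequence ending at `i` can replace the part of `I` up to `i`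
  have hfeas : Feasible a (S ∪ I.filter (i < ·)) := by
    refine hfS.union (hIf.mono (filter_subset _ _)) fun x hx y hy => ?_
    obtain ⟨hyI, hiy⟩ := mem_filter.1 hy
    refine ⟨(hSi x hx).trans_lt hiy, ?_⟩
    rcases (hSi x hx).lt_or_eq with hxi | rfl
    · exact (hfS x hx i hiS hxi).trans (hIf i hi y hyI hiy)
    · exact hIf x hi y hyI hiy
  have hdisj : Disjoint S (I.filter (i < ·)) :=
    disjoint_left.2 fun x hx hx' => absurd (mem_filter.1 hx').2 (not_lt.2 (hSi x hx))
  have hsub : S ∪ I.filter (i < ·) ⊆ range (n + 1) :=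
    union_subset (hS.trans (range_subset_range.2 (by have := mem_range.1 (hIn hi); omega)))
      ((filter_subset _ _).trans hIn)
  have hle := hImax _ hsub hfeas
  rw [card_union_of_disjoint hdisj, hcard] at hle
  have hsplit := card_filter_add_card_filter_not (s := I) (p := (· ≤ i))
  simp only [not_le] at hsplit
  omega

theorem notMem_inter_of_exchange (hI : MaxFeasible a n I) (hJ : MaxFeasible a n J) {u v c : ℕ}
    (hu : I \ J = {u}) (hv : J \ I = {v}) (huc : u < c) (hcv : c < v) : c ∉ I ∩ J := by
  rintro hc
  obtain ⟨hcI, hcJ⟩ := mem_inter.1 hc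
  obtain ⟨huI, huJ⟩ := mem_sdiff_of_sdiff_eq_singleton hu
  obtain ⟨hvJ, hvI⟩ := mem_sdiff_of_sdiff_eq_singleton hv
  have hJI : ∀ x ∈ I, x ≠ u → x ∈ J := fun x hx hxu => mem_of_sdiff_eq_singleton hu hx hxu
  -- `c` links `u` to `v`, so `v` can be added to `I`
  have hfeas : Feasible a (insert v I) := by
    refine hI.2.1.insert (fun x hx hxv => ?_) (fun x hx hvx => ?_)
    · rcases eq_or_ne x u with rfl | hxu
      · exact (hI.2.1 x hx c hcI huc).trans (hJ.2.1 c hcJ v hvJ hcv)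
      · exact hJ.2.1 x (hJI x hx hxu) v hvJ hxv
    · exact hJ.2.1 v hvJ x (hJI x hx (by omega)) hvx
  have hle := hI.2.2 _ (insert_subset (hJ.1 hvJ) hI.1) hfeas
  rw [card_insert_of_notMem hvI] at hle
  omega

theorem filter_inter_lt_eq_of_exchange (hI : MaxFeasible a n I) (hJ : MaxFeasible a n J)
    {u v : ℕ} (hu : I \ J = {u}) (hv : J \ I = {v}) :
    (I ∩ J).filter (· < u) = (I ∩ J).filter (· < v) := by
  ext x
  simp only [mem_filter, mem_inter, and_congr_right_iff, and_imp]
  intro hxI hxJ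
  have hxu : x ≠ u := fun h => (mem_sdiff_of_sdiff_eq_singleton hu).2 (h ▸ hxJ)
  have hxv : x ≠ v := fun h => (mem_sdiff_of_sdiff_eq_singleton hv).2 (h ▸ hxI)
  constructor
  · intro hxu'
    by_contra hvx
    exact notMem_inter_of_exchange hJ hI hv hu (by omega) hxu' (mem_inter.2 ⟨hxJ, hxI⟩)
  · intro hxv'
    by_contra hux
    exact notMem_inter_of_exchange hI hJ hu hv (by omega) hxv' (mem_inter.2 ⟨hxI, hxJ⟩)

theorem lisEnd_eq_of_exchange (hI : MaxFeasible a n I) (hJ : MaxFeasible a n J) {u v : ℕ}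
    (hu : I \ J = {u}) (hv : J \ I = {v}) : lisEnd a u = lisEnd a v := by
  rw [hI.lisEnd_eq_card_filter (mem_sdiff_of_sdiff_eq_singleton hu).1,
    hJ.lisEnd_eq_card_filter (mem_sdiff_of_sdiff_eq_singleton hv).1,
    card_filter_le_of_sdiff_eq_singleton hu, card_filter_le_of_sdiff_eq_singleton hv,
    inter_comm J I, filter_inter_lt_eq_of_exchange hI hJ hu hv]

end MaxFeasible

theorem List.getD_mem {α : Type*} {s : List α} {t : ℕ} (d : α) (ht : t < s.length) :
    s.getD t d ∈ s := by
  rw [List.getD_eq_getElem _ _ ht]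
  exact List.getElem_mem ht

theorem List.lt_length_of_mem_getD {α : Type*} {s : List (List α)} {t : ℕ} {x : α}
    (hx : x ∈ s.getD t []) : t < s.length := by
  by_contra ht
  rw [List.getD_eq_default _ _ (not_lt.1 ht)] at hx
  exact List.not_mem_nil hx

theorem List.headI_mem {α : Type*} [Inhabited α] {l : List α} (hl : l ≠ []) : l.headI ∈ l := by
  cases l with
  | nil => exact absurd rfl hl
  | cons x xs => exact List.mem_cons_self

theorem exists_getD_place_eq (a : ℕ → ℕ) (i : ℕ) (s : List (List ℕ)) :
    ∃ t₀ ≤ s.length, (∀ r < t₀, a (s.getD r []).headI ≤ a i) ∧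
      (t₀ < s.length → a i < a (s.getD t₀ []).headI) ∧
      ∀ t, (place a s i).getD t [] = if t = t₀ then i :: s.getD t [] else s.getD t [] := by
  induction s with
  | nil => exact ⟨0, le_rfl, by simp, by simp, fun t => by cases t <;> simp [place]⟩
  | cons p ps ih =>
    by_cases h : a i < a p.headI
    · exact ⟨0, by simp, by simp, by simpa using h, fun t => by cases t <;> simp [place, h]⟩
    · obtain ⟨t₀, ht₀, hbelow, habove, hget⟩ := ih
      refine ⟨t₀ + 1, by simpa using ht₀, fun r hr => ?_, fun ht => ?_, fun t => ?_⟩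
      · cases r with
        | zero => simpa using h
        | succ r => simpa using hbelow r (by omega)
      · simpa using habove (by simpa using ht)
      · cases t <;> simp only [place, h, if_false, List.getD_cons_zero, List.getD_cons_succ,
          hget, Nat.add_right_cancel_iff, reduceCtorEq]

theorem nil_notMem_place (a : ℕ → ℕ) (i : ℕ) {s : List (List ℕ)} (hs : [] ∉ s) :
    [] ∉ place a s i := by
  induction s with
  | nil => simp [place]
  | cons p ps ih =>
    simp only [List.mem_cons, not_or] at hs
    unfold place
    split_ifs <;> simp [hs.2, ih hs.2, Ne.symm hs.1]

/-- The piles after placing `0, …, m - 1`. Since `s.getD t [] = []` past the last pile, `mem_iff`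
also says that no `lisEnd a i` with `i < m` exceeds the number of piles. -/
structure PilesInv (a : ℕ → ℕ) (m : ℕ) (s : List (List ℕ)) : Prop where
  mem_iff : ∀ t i, i ∈ s.getD t [] ↔ i < m ∧ lisEnd a i = t + 1
  head_le : ∀ t, ∀ i ∈ s.getD t [], a (s.getD t []).headI ≤ a i
  nil_notMem : [] ∉ s

namespace PilesInv

variable {a : ℕ → ℕ} {m : ℕ} {s : List (List ℕ)}

theorem nil : PilesInv a 0 [] :=
  ⟨by simp, by simp, List.not_mem_nil⟩

theorem lisEnd_eq (hs : PilesInv a m s) (hinj : ∀ j < m, a j ≠ a m) {t₀ : ℕ}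
    (ht₀ : t₀ ≤ s.length) (hbelow : ∀ r < t₀, a (s.getD r []).headI ≤ a m)
    (habove : t₀ < s.length → a m < a (s.getD t₀ []).headI) : lisEnd a m = t₀ + 1 := by
  refine le_antisymm (not_lt.1 fun hlt => ?_) ?_
  · obtain ⟨j, hjm, haj, hj⟩ := exists_lt_lisEnd_eq (Nat.succ_pos t₀) hlt
    have hjt : j ∈ s.getD t₀ [] := (hs.mem_iff t₀ j).2 ⟨hjm, hj⟩
    have := hs.head_le t₀ j hjt
    have := habove (List.lt_length_of_mem_getD hjt)
    omega
  · cases t₀ with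
    | zero => exact one_le_lisEnd a m
    | succ r =>
      -- the top of the pile left of `m`'s pile extends to an increasing subsequence ending at `m`
      have hne : s.getD r [] ≠ [] := fun h => hs.nil_notMem (h ▸ List.getD_mem [] (by omega))
      obtain ⟨hjm, hj⟩ := (hs.mem_iff r _).1 (List.headI_mem hne)
      have := lisEnd_lt_of_lt hjm ((hbelow r r.lt_succ_self).lt_of_ne (hinj _ hjm))
      omega

theorem place (hs : PilesInv a m s) (hinj : ∀ j < m, a j ≠ a m) :
    PilesInv a (m + 1) (place a s m) := by
  obtain ⟨t₀, ht₀, hbelow, habove, hget⟩ := exists_getD_place_eq a m s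
  have hm := hs.lisEnd_eq hinj ht₀ hbelow habove
  refine ⟨fun t i => ?_, fun t i hi => ?_, nil_notMem_place a m hs.nil_notMem⟩
  · rw [hget]
    split_ifs with ht
    · rw [List.mem_cons, hs.mem_iff]
      rcases eq_or_ne i m with rfl | him
      · simp [hm, ht]
      · simp only [him, false_or]
        omega
    · rw [hs.mem_iff]
      rcases eq_or_ne i m with rfl | him
      · simp only [lt_irrefl, false_and, lt_add_one, true_and, false_iff, hm]
        omega
      · omega
  · rw [hget] at hi ⊢
    split_ifs at hi ⊢ with ht
    · subst ht
      rw [List.headI_cons]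
      rcases List.mem_cons.1 hi with rfl | hi
      · exact le_rfl
      · exact (habove (List.lt_length_of_mem_getD hi)).le.trans (hs.head_le _ _ hi)
    · exact hs.head_le t i hi

theorem mem_getD_lisEnd (hs : PilesInv a m s) {i : ℕ} (hi : i < m) :
    i ∈ s.getD (lisEnd a i - 1) [] :=
  (hs.mem_iff _ i).2 ⟨hi, by have := one_le_lisEnd a i; omega⟩

end PilesInv

theorem pilesInv_pilesOf {a : ℕ → ℕ} {n : ℕ} (hinj : Set.InjOn a (Set.Iic n)) {m : ℕ}
    (hm : m ≤ n + 1) : PilesInv a m (pilesOf a (List.range m)) := by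
  induction m with
  | zero => exact PilesInv.nil
  | succ m ih =>
    rw [pilesOf, List.range_succ, List.foldl_append]
    exact (ih (by omega)).place fun j hj => hinj.ne (by simp; omega) (by simp; omega) hj.ne

theorem injOn_of_mem_Icc {a : ℕ → ℕ} {n : ℕ} (h0 : a 0 = 0)
    (hmem : ∀ i ∈ Finset.Icc 1 n, a i ∈ Finset.Icc 1 n)
    (hinj : ∀ i ∈ Finset.Icc 1 n, ∀ j ∈ Finset.Icc 1 n, a i = a j → i = j) :
    Set.InjOn a (Set.Iic n) := by
  have hpos : ∀ i ≤ n, 0 < i → 0 < a i := fun i hin hi =>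
    (Finset.mem_Icc.1 (hmem i (Finset.mem_Icc.2 ⟨hi, hin⟩))).1
  intro i hi j hj hij
  simp only [Set.mem_Iic] at hi hj
  rcases Nat.eq_zero_or_pos i with rfl | hi0 <;> rcases Nat.eq_zero_or_pos j with rfl | hj0
  · rfl
  · have := hpos j hj hj0; omega
  · have := hpos i hi hi0; omega
  · exact hinj i (Finset.mem_Icc.2 ⟨hi0, hi⟩) j (Finset.mem_Icc.2 ⟨hj0, hj⟩) hij

theorem stmt6_general (n : ℕ) (a : ℕ → ℕ) (h0 : a 0 = 0)
    (hmem : ∀ i ∈ Finset.Icc 1 n, a i ∈ Finset.Icc 1 n)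
    (hinj : ∀ i ∈ Finset.Icc 1 n, ∀ j ∈ Finset.Icc 1 n, a i = a j → i = j)
    (I J : Finset ℕ) (hI : MaxFeasible a n I) (hJ : MaxFeasible a n J)
    (u v : ℕ) (hu : I \ J = {u}) (hv : J \ I = {v}) :
    ∃ p ∈ pilesOf a (List.range (n + 1)), u ∈ p ∧ v ∈ p := by
  have hs := pilesInv_pilesOf (injOn_of_mem_Icc h0 hmem hinj) le_rfl
  have hu' := hs.mem_getD_lisEnd (mem_range.1 (hI.1 (mem_sdiff_of_sdiff_eq_singleton hu).1))
  have hv' := hs.mem_getD_lisEnd (mem_range.1 (hJ.1 (mem_sdiff_of_sdiff_eq_singleton hv).1))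
  rw [← hI.lisEnd_eq_of_exchange hJ hu hv] at hv'
  exact ⟨_, List.getD_mem [] (List.lt_length_of_mem_getD hu'), hu', hv'⟩

/-- If `I` and `J` are maximum feasible sets for `a₀ = 0, a₁, …, aₙ` (where
`a₁, …, aₙ` are distinct integers between `1` and `n`) with `I \ J = {u}` and
`J \ I = {v}`, then `a u` and `a v` belong to the same pile produced by
patience sorting. -/
theorem stmt6 (n : ℕ) (a : ℕ → ℕ) (hn : 0 < n) (h0 : a 0 = 0)
    (hmem : ∀ i ∈ Finset.Icc 1 n, a i ∈ Finset.Icc 1 n)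
    (hinj : ∀ i ∈ Finset.Icc 1 n, ∀ j ∈ Finset.Icc 1 n, a i = a j → i = j)
    (I J : Finset ℕ) (hI : MaxFeasible a n I) (hJ : MaxFeasible a n J)
    (u v : ℕ) (hu : I \ J = {u}) (hv : J \ I = {v}) :
    ∃ p ∈ pilesOf a (List.range (n + 1)), u ∈ p ∧ v ∈ p :=
  stmt6_general n a h0 hmem hinj I J hI hJ u v hu hv
end
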